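/- The partial derivative with respect to t_n of Σ_{i=1}^n (t_i − 1) H̃_i equals tr(A_n A_{n+1})/t_n². -/

import Mathlib

/-!
Write `H_j = ∑_{k ≠ j} tr(A_j A_k) / (t_j - t_k)` for each of the `n + 2` finite poles, so that
`H̃_i = H_i`. Pairing the `(j, k)` and `(k, j)` terms of `∑_j (t_j - 1) H_j` gives
`½ ∑_{j ≠ k} tr(A_j A_k) = ½ (tr((∑_j A_j)²) - ∑_j tr(A_j²))`, which is constant because
`∑_j A_j` is and `tr(A_j²) = θ_j²` when `det A_j = 0`. The pole `t_{n+2} = 1` has weight `0`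
and `t_{n+1} = 0` has weight `-1`, so `∑_{i ≤ n} (t_i - 1) H̃_i = H_{n+1} + const`. Finally, for
every pole `t_a` other than `t_ν` the Schlesinger equations give
`∂H_a/∂t_ν = tr(A_ν A_a) / (t_ν - t_a)²`.
-/

open Finset

noncomputable section

/-- Extend `t = (t₁, …, tₙ) : Fin n → ℂ` by the fixed points `t_{n+1} = 0` and
`t_{n+2} = 1` (0-based: indices `n` and `n+1` of `Fin (n+2)`). -/
def ext (n : ℕ) (t : Fin n → ℂ) (j : Fin (n + 2)) : ℂ :=
  if h : (j : ℕ) < n then t ⟨j, h⟩ else if (j : ℕ) = n then 0 else 1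

/-- Inclusion of indices `1, …, n` into `1, …, n+2` (0-based). -/
def inc (n : ℕ) : Fin n → Fin (n + 2) := Fin.castLE (by omega)

/-- The partial derivative `∂f/∂t_i` of a scalar function on `ℂⁿ`. -/
def pderiv (n : ℕ) (i : Fin n) (f : (Fin n → ℂ) → ℂ) (t : Fin n → ℂ) : ℂ :=
  fderiv ℂ f t (Pi.single i 1)

/-- `ρ = −(θ₁ + ⋯ + θ_{n+3})/2`. -/
def rho (n : ℕ) (θ : Fin (n + 3) → ℂ) : ℂ := -(∑ j, θ j) / 2

/-- The constants `C_{ij} = −θ_iθ_j/2 + (θ_i² + θ_j²)/(2(n+1))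
− (Σ_k θ_k²)/(2(n+1)(n+2))`. -/
def Cc (n : ℕ) (θ : Fin (n + 3) → ℂ) (i j : Fin (n + 2)) : ℂ :=
  -(θ (Fin.castSucc i) * θ (Fin.castSucc j)) / 2
    + (θ (Fin.castSucc i) ^ 2 + θ (Fin.castSucc j) ^ 2) / (2 * ((n : ℂ) + 1))
    - (∑ k, θ k ^ 2) / (2 * ((n : ℂ) + 1) * ((n : ℂ) + 2))

/-- `H̃_i = Σ_{1 ≤ j ≤ n+2, j ≠ i} tr(A_i A_j)/(t_i − t_j)`. -/
def Htil (n : ℕ) (A : Fin (n + 2) → (Fin n → ℂ) → Matrix (Fin 2) (Fin 2) ℂ)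
    (i : Fin n) (t : Fin n → ℂ) : ℂ :=
  ∑ j ∈ Finset.univ.filter (fun j => j ≠ inc n i),
    (A (inc n i) t * A j t).trace / (t i - ext n t j)


open Matrix Function

section TraceIdentities

variable {m R : Type*} [Fintype m] [CommRing R]

theorem trace_commutator_mul (X Y Z : Matrix m m R) :
    ((X * Y - Y * X) * Z).trace = -(Y * (X * Z - Z * X)).trace := by
  simp only [sub_mul, mul_sub, trace_sub, Matrix.mul_assoc]
  rw [trace_mul_comm X, Matrix.mul_assoc]
  ring

theorem trace_mul_commutator_self (X Y : Matrix m m R) :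
    (Y * (X * Y - Y * X)).trace = 0 := by
  rw [mul_sub, trace_sub, ← Matrix.mul_assoc, trace_mul_comm (Y * X), sub_self]

theorem trace_mul_self_fin_two_of_det_eq_zero (X : Matrix (Fin 2) (Fin 2) R) (h : X.det = 0) :
    (X * X).trace = X.trace ^ 2 := by
  rw [det_fin_two] at h
  simp only [trace_fin_two, mul_apply, Fin.sum_univ_two]
  linear_combination -2 * h

end TraceIdentities

section Symmetrization

variable {ι m K : Type*} [Fintype ι] [DecidableEq ι] [Fintype m] [Field K]

theorem sum_sum_ne_comm {M : Type*} [AddCommMonoid M] (f : ι → ι → M) :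
    ∑ j, ∑ k ∈ univ.filter (· ≠ j), f j k = ∑ j, ∑ k ∈ univ.filter (· ≠ j), f k j := by
  simp only [sum_filter]
  rw [sum_comm]
  refine sum_congr rfl fun j _ => sum_congr rfl fun k _ => ?_
  simp only [ne_comm]

theorem sum_sum_ne_trace_mul (M : ι → Matrix m m K) :
    ∑ j, ∑ k ∈ univ.filter (· ≠ j), (M j * M k).trace
      = ((∑ j, M j) * ∑ j, M j).trace - ∑ j, (M j * M j).trace := by
  simp only [filter_ne', sum_erase_eq_sub (mem_univ _), sum_sub_distrib, sum_mul_sum,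
    trace_sum]

def schlesingerHam (x : ι → K) (M : ι → Matrix m m K) (j : ι) : K :=
  ∑ k ∈ univ.filter (· ≠ j), (M j * M k).trace / (x j - x k)

theorem two_mul_sum_sub_mul_schlesingerHam {x : ι → K} (hx : Injective x) (c : K)
    (M : ι → Matrix m m K) :
    2 * ∑ j, (x j - c) * schlesingerHam x M j
      = ∑ j, ∑ k ∈ univ.filter (· ≠ j), (M j * M k).trace := by
  rw [two_mul]
  simp only [schlesingerHam, mul_sum]
  nth_rewrite 2 [sum_sum_ne_comm]
  rw [← sum_add_distrib]
  refine sum_congr rfl fun j _ => ?_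
  rw [← sum_add_distrib]
  refine sum_congr rfl fun k hk => ?_
  have hjk : x j - x k ≠ 0 := sub_ne_zero.mpr (hx.ne (mem_filter.mp hk).2.symm)
  have hkj : x k - x j ≠ 0 := sub_ne_zero.mpr (hx.ne (mem_filter.mp hk).2)
  rw [trace_mul_comm (M k)]
  field_simp
  ring

end Symmetrization

section ExtendedConfiguration

variable {n : ℕ}

theorem ext_inc (s : Fin n → ℂ) (i : Fin n) : ext n s (inc n i) = s i := by
  simp [_root_.ext, inc]

theorem castSucc_castSucc_eq_inc (i : Fin n) : i.castSucc.castSucc = inc n i := rfl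

theorem ext_castSucc_last (s : Fin n → ℂ) : ext n s (Fin.last n).castSucc = 0 := by
  simp [_root_.ext]

theorem ext_last (s : Fin n → ℂ) : ext n s (Fin.last (n + 1)) = 1 := by
  simp [_root_.ext]

theorem Htil_eq_schlesingerHam (A : Fin (n + 2) → (Fin n → ℂ) → Matrix (Fin 2) (Fin 2) ℂ)
    (i : Fin n) (s : Fin n → ℂ) :
    Htil n A i s = schlesingerHam (ext n s) (A · s) (inc n i) := by
  simp only [Htil, schlesingerHam, ext_inc]

theorem sum_sub_one_mul_Htil_eq (θ : Fin (n + 3) → ℂ)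
    (A : Fin (n + 2) → (Fin n → ℂ) → Matrix (Fin 2) (Fin 2) ℂ) {s : Fin n → ℂ}
    (hx : Injective (ext n s)) (hdet : ∀ j, (A j s).det = 0)
    (htr : ∀ j : Fin (n + 2), (A j s).trace = θ (Fin.castSucc j))
    (hsum : ∑ j, A j s = -Matrix.diagonal ![rho n θ, rho n θ + θ (Fin.last (n + 2))]) :
    ∑ i, (s i - 1) * Htil n A i s
      = schlesingerHam (ext n s) (A · s) (Fin.last n).castSucc
        + (((-Matrix.diagonal ![rho n θ, rho n θ + θ (Fin.last (n + 2))]) *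
            -Matrix.diagonal ![rho n θ, rho n θ + θ (Fin.last (n + 2))]).trace
          - ∑ j : Fin (n + 2), θ (Fin.castSucc j) ^ 2) / 2 := by
  have key := two_mul_sum_sub_mul_schlesingerHam hx 1 (A · s)
  rw [sum_sum_ne_trace_mul, hsum] at key
  simp only [trace_mul_self_fin_two_of_det_eq_zero _ (hdet _), htr] at key
  rw [Fin.sum_univ_castSucc, Fin.sum_univ_castSucc, ext_castSucc_last, ext_last] at key
  simp only [castSucc_castSucc_eq_inc, ext_inc] at key
  simp only [Htil_eq_schlesingerHam]
  linear_combination key / 2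

end ExtendedConfiguration

section PartialDerivatives

variable {n : ℕ} {i : Fin n} {t : Fin n → ℂ} {f g : (Fin n → ℂ) → ℂ}

theorem pderiv_fun_sub (hf : DifferentiableAt ℂ f t) (hg : DifferentiableAt ℂ g t) :
    pderiv n i (fun s => f s - g s) t = pderiv n i f t - pderiv n i g t := by
  simp only [pderiv, fderiv_fun_sub hf hg, _root_.sub_apply]

theorem pderiv_fun_mul (hf : DifferentiableAt ℂ f t) (hg : DifferentiableAt ℂ g t) :
    pderiv n i (fun s => f s * g s) t = pderiv n i f t * g t + f t * pderiv n i g t := by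
  simp only [pderiv, fderiv_fun_mul hf hg, _root_.add_apply,
    _root_.smul_apply, smul_eq_mul]
  ring

theorem pderiv_fun_sum {ι : Type*} {u : Finset ι} {F : ι → (Fin n → ℂ) → ℂ}
    (hF : ∀ k ∈ u, DifferentiableAt ℂ (F k) t) :
    pderiv n i (fun s => ∑ k ∈ u, F k s) t = ∑ k ∈ u, pderiv n i (F k) t := by
  simp only [pderiv, fderiv_fun_sum hF, _root_.sum_apply]

theorem differentiableAt_fun_div (hf : DifferentiableAt ℂ f t) (hg : DifferentiableAt ℂ g t)
    (hg0 : g t ≠ 0) : DifferentiableAt ℂ (fun s => f s / g s) t := by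
  simpa only [div_eq_mul_inv] using hf.fun_mul (hg.fun_inv hg0)

theorem pderiv_fun_div (hf : DifferentiableAt ℂ f t) (hg : DifferentiableAt ℂ g t)
    (hg0 : g t ≠ 0) :
    pderiv n i (fun s => f s / g s) t
      = (pderiv n i f t * g t - f t * pderiv n i g t) / g t ^ 2 := by
  have hinv : HasFDerivAt (fun s => (g s)⁻¹)
      ((ContinuousLinearMap.toSpanSingleton ℂ (-(g t ^ 2)⁻¹)).comp (fderiv ℂ g t)) t :=
    (hasFDerivAt_inv hg0).comp t hg.hasFDerivAt
  simp only [div_eq_mul_inv, pderiv, (hf.hasFDerivAt.fun_mul hinv).fderiv]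
  simp only [_root_.add_apply, _root_.smul_apply,
    ContinuousLinearMap.comp_apply, ContinuousLinearMap.toSpanSingleton_apply, smul_eq_mul]
  field_simp
  ring

theorem differentiableAt_ext (k : Fin (n + 2)) : DifferentiableAt ℂ (fun s => ext n s k) t := by
  unfold _root_.ext
  split_ifs
  exacts [differentiableAt_apply _ t, differentiableAt_const _, differentiableAt_const _]

theorem pderiv_ext (k : Fin (n + 2)) :
    pderiv n i (fun s => ext n s k) t = if k = inc n i then 1 else 0 := by
  unfold _root_.ext pderiv
  split_ifs <;>
    (first | rw [(hasFDerivAt_apply _ t).fderiv] | rw [fderiv_fun_const]) <;>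
    simp_all [Fin.ext_iff, inc]

variable {m : Type*} [Fintype m] {M N : (Fin n → ℂ) → Matrix m m ℂ}

theorem differentiableAt_trace_mul (hM : ∀ k l, DifferentiableAt ℂ (fun s => M s k l) t)
    (hN : ∀ k l, DifferentiableAt ℂ (fun s => N s k l) t) :
    DifferentiableAt ℂ (fun s => (M s * N s).trace) t := by
  simp only [trace, Matrix.diag, mul_apply]
  exact .fun_sum fun k _ => .fun_sum fun l _ => (hM k l).fun_mul (hN l k)

theorem pderiv_trace_mul (hM : ∀ k l, DifferentiableAt ℂ (fun s => M s k l) t)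
    (hN : ∀ k l, DifferentiableAt ℂ (fun s => N s k l) t) {M' N' : Matrix m m ℂ}
    (hM' : ∀ k l, pderiv n i (fun s => M s k l) t = M' k l)
    (hN' : ∀ k l, pderiv n i (fun s => N s k l) t = N' k l) :
    pderiv n i (fun s => (M s * N s).trace) t = (M' * N t + M t * N').trace := by
  simp only [trace, Matrix.diag, mul_apply, Matrix.add_apply, ← sum_add_distrib]
  rw [pderiv_fun_sum fun k _ => .fun_sum fun l _ => (hM k l).fun_mul (hN l k)]
  refine sum_congr rfl fun k _ => ?_
  rw [pderiv_fun_sum fun l _ => (hM k l).fun_mul (hN l k)]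
  refine sum_congr rfl fun l _ => ?_
  rw [pderiv_fun_mul (hM k l) (hN l k), hM', hN']

end PartialDerivatives

section SchlesingerSystem

variable {n : ℕ} {m : Type*} [Fintype m] {A : Fin (n + 2) → (Fin n → ℂ) → Matrix m m ℂ}
  {t : Fin n → ℂ} {ν : Fin n}

theorem pderiv_trace_mul_of_ne_inc
    (hA : ∀ j k l, DifferentiableAt ℂ (fun s => A j s k l) t)
    (hSch1 : ∀ j, j ≠ inc n ν → ∀ k l, pderiv n ν (fun s => A j s k l) t
      = ((t ν - ext n t j)⁻¹ • (A (inc n ν) t * A j t - A j t * A (inc n ν) t)) k l)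
    {a k : Fin (n + 2)} (ha : a ≠ inc n ν) (hk : k ≠ inc n ν) :
    pderiv n ν (fun s => (A a s * A k s).trace) t
      = ((t ν - ext n t k)⁻¹ - (t ν - ext n t a)⁻¹)
        * (A a t * (A (inc n ν) t * A k t - A k t * A (inc n ν) t)).trace := by
  rw [pderiv_trace_mul (hA a) (hA k) (hSch1 a ha) (hSch1 k hk), trace_add, Matrix.smul_mul,
    Matrix.mul_smul, trace_smul, trace_smul, trace_commutator_mul, smul_eq_mul, smul_eq_mul]
  ring

theorem pderiv_trace_mul_inc
    (hA : ∀ j k l, DifferentiableAt ℂ (fun s => A j s k l) t)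
    (hSch1 : ∀ j, j ≠ inc n ν → ∀ k l, pderiv n ν (fun s => A j s k l) t
      = ((t ν - ext n t j)⁻¹ • (A (inc n ν) t * A j t - A j t * A (inc n ν) t)) k l)
    (hSch2 : ∀ k l, pderiv n ν (fun s => A (inc n ν) s k l) t
      = ∑ j ∈ univ.filter (· ≠ inc n ν),
          ((t ν - ext n t j)⁻¹ • (A j t * A (inc n ν) t - A (inc n ν) t * A j t)) k l)
    {a : Fin (n + 2)} (ha : a ≠ inc n ν) :
    pderiv n ν (fun s => (A a s * A (inc n ν) s).trace) t
      = -∑ j ∈ univ.filter (· ≠ inc n ν), (t ν - ext n t j)⁻¹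
          * (A a t * (A (inc n ν) t * A j t - A j t * A (inc n ν) t)).trace := by
  have hSch2' : ∀ k l, pderiv n ν (fun s => A (inc n ν) s k l) t
      = (∑ j ∈ univ.filter (· ≠ inc n ν),
          (t ν - ext n t j)⁻¹ • (A j t * A (inc n ν) t - A (inc n ν) t * A j t)) k l := by
    simpa only [Matrix.sum_apply] using hSch2
  rw [pderiv_trace_mul (hA a) (hA _) (hSch1 a ha) hSch2', trace_add, Matrix.smul_mul, trace_smul,
    trace_commutator_mul, sub_self, Matrix.mul_zero, trace_zero, neg_zero, smul_zero, zero_add,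
    mul_sum, trace_sum, ← sum_neg_distrib]
  refine sum_congr rfl fun j _ => ?_
  rw [Matrix.mul_smul, trace_smul, smul_eq_mul, ← neg_sub (A (inc n ν) t * A j t), Matrix.mul_neg,
    trace_neg, mul_neg]

theorem pderiv_trace_mul_div_sub_ext (hA : ∀ j k l, DifferentiableAt ℂ (fun s => A j s k l) t)
    {a k : Fin (n + 2)} (ha : a ≠ inc n ν) (hak : ext n t a - ext n t k ≠ 0) :
    pderiv n ν (fun s => (A a s * A k s).trace / (ext n s a - ext n s k)) t
      = (pderiv n ν (fun s => (A a s * A k s).trace) t * (ext n t a - ext n t k)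
          + if k = inc n ν then (A a t * A k t).trace else 0) / (ext n t a - ext n t k) ^ 2 := by
  rw [pderiv_fun_div (differentiableAt_trace_mul (hA a) (hA k))
    ((differentiableAt_ext a).fun_sub (differentiableAt_ext k)) hak,
    pderiv_fun_sub (differentiableAt_ext a) (differentiableAt_ext k), pderiv_ext, pderiv_ext,
    if_neg ha]
  split_ifs <;> ring

theorem pderiv_schlesingerHam_of_ne_inc
    (hA : ∀ j k l, DifferentiableAt ℂ (fun s => A j s k l) t) (hx : Injective (ext n t))
    (hSch1 : ∀ j, j ≠ inc n ν → ∀ k l, pderiv n ν (fun s => A j s k l) t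
      = ((t ν - ext n t j)⁻¹ • (A (inc n ν) t * A j t - A j t * A (inc n ν) t)) k l)
    (hSch2 : ∀ k l, pderiv n ν (fun s => A (inc n ν) s k l) t
      = ∑ j ∈ univ.filter (· ≠ inc n ν),
          ((t ν - ext n t j)⁻¹ • (A j t * A (inc n ν) t - A (inc n ν) t * A j t)) k l)
    {a : Fin (n + 2)} (ha : a ≠ inc n ν) :
    pderiv n ν (fun s => schlesingerHam (ext n s) (A · s) a) t
      = (A (inc n ν) t * A a t).trace / (t ν - ext n t a) ^ 2 := by
  have hxa : ∀ k, k ≠ a → ext n t a - ext n t k ≠ 0 := fun k hk => sub_ne_zero.mpr (hx.ne hk.symm)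
  have hxν : ∀ k, k ≠ inc n ν → t ν - ext n t k ≠ 0 := fun k hk =>
    sub_ne_zero.mpr (by simpa [ext_inc] using hx.ne hk.symm)
  have hνa := hxν a ha
  -- `φ` vanishes at `a` and at `ν`, so the sums `∑_{j ≠ ν} φ j` and `∑_{k ≠ a} φ k` cancel.
  set φ : Fin (n + 2) → ℂ := fun j => (t ν - ext n t a)⁻¹ * ((t ν - ext n t j)⁻¹
    * (A a t * (A (inc n ν) t * A j t - A j t * A (inc n ν) t)).trace)
  have hφ_sum : ∀ j, φ j = 0 → ∑ k ∈ univ.filter (· ≠ j), φ k = ∑ k, φ k := fun j hj => by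
    rw [filter_ne', sum_erase _ hj]
  have hterm : ∀ k ∈ univ.filter (· ≠ a),
      pderiv n ν (fun s => (A a s * A k s).trace / (ext n s a - ext n s k)) t
        = (if k = inc n ν then (A a t * A (inc n ν) t).trace / (t ν - ext n t a) ^ 2
            + ∑ j ∈ univ.filter (· ≠ inc n ν), φ j else 0) - φ k := by
    intro k hk
    have hak := hxa k (mem_filter.mp hk).2
    rw [pderiv_trace_mul_div_sub_ext hA ha hak]
    by_cases hkν : k = inc n ν
    · subst hkν
      rw [pderiv_trace_mul_inc hA hSch1 hSch2 ha, if_pos rfl, if_pos rfl, ext_inc]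
      rw [ext_inc] at hak
      simp only [φ, sub_self, trace_zero, mul_zero, sub_zero, ← mul_sum]
      field_simp
      ring
    · have hνk := hxν k hkν
      rw [pderiv_trace_mul_of_ne_inc hA hSch1 ha hkν, if_neg hkν, if_neg hkν]
      simp only [φ]
      field_simp
      ring
  have hdiff : ∀ k ∈ univ.filter (· ≠ a),
      DifferentiableAt ℂ (fun s => (A a s * A k s).trace / (ext n s a - ext n s k)) t :=
    fun k hk => differentiableAt_fun_div (differentiableAt_trace_mul (hA a) (hA k))
      ((differentiableAt_ext a).fun_sub (differentiableAt_ext k)) (hxa k (mem_filter.mp hk).2)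
  simp only [schlesingerHam]
  rw [pderiv_fun_sum hdiff, sum_congr rfl hterm, sum_sub_distrib, sum_ite_eq',
    if_pos (by simp [ha.symm]), hφ_sum (inc n ν) (by simp [φ]),
    hφ_sum a (by simp [φ, trace_mul_commutator_self]), trace_mul_comm (A a t)]
  ring

end SchlesingerSystem

/-- `∂/∂t_n ( Σ_{i=1}^n (t_i − 1) H̃_i ) = tr(A_n A_{n+1}) / t_n²`
(recall `t_{n+1} = 0`). -/
theorem pderiv_last_weighted_Htil
    (n : ℕ) (hn : 2 ≤ n) (θ : Fin (n + 3) → ℂ)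
    (U : Set (Fin n → ℂ)) (hU : IsOpen U)
    (A : Fin (n + 2) → (Fin n → ℂ) → Matrix (Fin 2) (Fin 2) ℂ)
    (hdist : ∀ t ∈ U, ∀ j k : Fin (n + 2), j ≠ k → ext n t j ≠ ext n t k)
    (hHol : ∀ (j : Fin (n + 2)) (k l : Fin 2),
      DifferentiableOn ℂ (fun s => A j s k l) U)
    (hdet : ∀ t ∈ U, ∀ j, (A j t).det = 0)
    (htr : ∀ t ∈ U, ∀ j : Fin (n + 2), (A j t).trace = θ (Fin.castSucc j))
    (hsum : ∀ t ∈ U, ∑ j, A j t =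
      -Matrix.diagonal ![rho n θ, rho n θ + θ (Fin.last (n + 2))])
    (hSch1 : ∀ t ∈ U, ∀ (i : Fin n) (j : Fin (n + 2)), j ≠ inc n i →
      ∀ (k l : Fin 2),
        pderiv n i (fun s => A j s k l) t
          = ((t i - ext n t j)⁻¹ •
              (A (inc n i) t * A j t - A j t * A (inc n i) t)) k l)
    (hSch2 : ∀ t ∈ U, ∀ (i : Fin n) (k l : Fin 2),
      pderiv n i (fun s => A (inc n i) s k l) t
        = ∑ j ∈ Finset.univ.filter (fun j => j ≠ inc n i),
            ((t i - ext n t j)⁻¹ •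
              (A j t * A (inc n i) t - A (inc n i) t * A j t)) k l)
    :
    ∀ t ∈ U,
      pderiv n ⟨n - 1, by omega⟩ (fun s => ∑ i, (s i - 1) * Htil n A i s) t
        = (A (inc n ⟨n - 1, by omega⟩) t * A ⟨n, by omega⟩ t).trace
            / (t ⟨n - 1, by omega⟩) ^ 2 := by
  intro t ht
  have hx : ∀ s ∈ U, Injective (ext n s) := fun s hs j k => not_imp_not.mp (hdist s hs j k)
  have hlocal := Filter.eventuallyEq_of_mem (hU.mem_nhds ht) fun s hs =>
    sum_sub_one_mul_Htil_eq θ A (hx s hs) (hdet s hs) (htr s hs) (hsum s hs)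
  have hne : (Fin.last n).castSucc ≠ inc n ⟨n - 1, by omega⟩ := by
    simp [Fin.ext_iff, inc]
    omega
  calc pderiv n ⟨n - 1, by omega⟩ (fun s => ∑ i, (s i - 1) * Htil n A i s) t
      = pderiv n ⟨n - 1, by omega⟩
          (fun s => schlesingerHam (ext n s) (A · s) (Fin.last n).castSucc) t := by
        simp only [pderiv]
        rw [hlocal.fderiv_eq, fderiv_add_const]
    _ = _ := by
        rw [pderiv_schlesingerHam_of_ne_inc
          (fun j k l => (hHol j k l).differentiableAt (hU.mem_nhds ht)) (hx t ht)
          (hSch1 t ht _) (hSch2 t ht _) hne, ext_castSucc_last, sub_zero]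
        rfl
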